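/- Let H be infinite-dimensional separable, (eₙ) an orthonormal basis of H, and define A on H ⊕ H by A(x,y) = (x, Σₙ ⟨y,eₙ⟩ 2⁻ⁿ eₙ). Let V = {(x,y) : x = 0} = 0 ⊕ H. Then A is bounded, nonnegative, with dense range in H ⊕ H, the orthogonal projection P_V onto V does NOT belong to 𝓛₊(A), yet the unitary U(x,y) = (y,x) maps V into the range of A. -/

import Mathlib

/-!
`A` is the identity on the first summand and the diagonal operator with weights `2⁻⁽ⁿ⁺¹⁾` on the
second, so it is positive and injective; being self-adjoint, it then has dense range.
The unit vectors `(0, eₙ)` lie in `V` while `‖A (0, eₙ)‖ = 2⁻⁽ⁿ⁺¹⁾ → 0`. If `0 ≤ B ≤ c A` were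
within `1/2` of `P_V`, then at such a vector with `c ‖A v‖ < 1/2` we would get
`re ⟪B v, v⟫ < 1/2` while `⟪P_V v, v⟫ = 1`, contradicting `‖P_V - B‖ < 1/2`.
Finally `U (0, y) = (y, 0) = A (y, 0)`.
-/

open scoped InnerProductSpace

/-- `L₊(A)`: the cone of nonnegative operators dominated by a positive multiple of `A`. -/
def Lplus {E : Type*} [NormedAddCommGroup E] [InnerProductSpace ℂ E] [CompleteSpace E]
    (A : E →L[ℂ] E) : Set (E →L[ℂ] E) :=
  {B | B.IsPositive ∧ ∃ c : ℝ, 0 < c ∧ (c • A - B).IsPositive}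

namespace HilbertBasis

variable {ι 𝕜 E : Type*} [RCLike 𝕜] [NormedAddCommGroup E] [InnerProductSpace 𝕜 E]
  (b : HilbertBasis ι 𝕜 E) (w : ι → ℝ)

-- For unbounded `w` the series may diverge, and then `tsum` returns `0`.
noncomputable def diagonal (y : E) : E :=
  ∑' i, ((w i : 𝕜) * ⟪b i, y⟫_𝕜) • b i

variable {w}

theorem hasSum_diagonal {C : ℝ} (hw : ∀ i, |w i| ≤ C) (y : E) :
    HasSum (fun i => ((w i : 𝕜) * ⟪b i, y⟫_𝕜) • b i) (b.diagonal w y) := by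
  have hmem : Memℓp (fun i => (w i : 𝕜) * ⟪b i, y⟫_𝕜) 2 := by
    refine ((lp.memℓp (b.repr y)).norm.const_mul C).mono fun i => ?_
    rw [norm_mul, RCLike.norm_ofReal, b.repr_apply_apply]
    exact mul_le_mul_of_nonneg_right (hw i) (norm_nonneg _)
  exact (b.hasSum_repr_symm ⟨_, hmem⟩).summable.hasSum

theorem hasSum_inner_diagonal_left {C : ℝ} (hw : ∀ i, |w i| ≤ C) (y z : E) :
    HasSum (fun i => (w i : 𝕜) * (⟪y, b i⟫_𝕜 * ⟪b i, z⟫_𝕜)) ⟪b.diagonal w y, z⟫_𝕜 := by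
  have h := ((b.hasSum_diagonal hw y).mapL (innerSL 𝕜 z)).star
  simp only [innerSL_apply_apply, inner_smul_right, star_mul', RCLike.star_def,
    RCLike.conj_ofReal, inner_conj_symm] at h
  convert h using 2 with i
  ring

theorem hasSum_inner_diagonal_right {C : ℝ} (hw : ∀ i, |w i| ≤ C) (y z : E) :
    HasSum (fun i => (w i : 𝕜) * (⟪y, b i⟫_𝕜 * ⟪b i, z⟫_𝕜)) ⟪y, b.diagonal w z⟫_𝕜 := by
  have h := (b.hasSum_diagonal hw z).mapL (innerSL 𝕜 y)
  simp only [innerSL_apply_apply, inner_smul_right] at h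
  convert h using 2 with i
  ring

theorem inner_diagonal_left {C : ℝ} (hw : ∀ i, |w i| ≤ C) (y z : E) :
    ⟪b.diagonal w y, z⟫_𝕜 = ⟪y, b.diagonal w z⟫_𝕜 :=
  (b.hasSum_inner_diagonal_left hw y z).unique (b.hasSum_inner_diagonal_right hw y z)

theorem re_inner_diagonal_self_nonneg {C : ℝ} (hw : ∀ i, |w i| ≤ C) (hw₀ : ∀ i, 0 ≤ w i)
    (y : E) : 0 ≤ RCLike.re ⟪b.diagonal w y, y⟫_𝕜 := by
  refine ((b.hasSum_inner_diagonal_left hw y y).mapL RCLike.reCLM).nonneg fun i => ?_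
  rw [← inner_conj_symm, RCLike.conj_mul]
  simp only [RCLike.reCLM_apply]
  norm_cast
  exact mul_nonneg (hw₀ i) (sq_nonneg _)

theorem diagonal_apply_self (k : ι) : b.diagonal w (b k) = (w k : 𝕜) • b k := by
  classical
  rw [diagonal, tsum_eq_single k fun i hi => by simp [orthonormal_iff_ite.mp b.orthonormal, hi]]
  simp [b.orthonormal.1 k]

theorem repr_diagonal {C : ℝ} (hw : ∀ i, |w i| ≤ C) (y : E) (k : ι) :
    b.repr (b.diagonal w y) k = w k * b.repr y k := by
  rw [b.repr_apply_apply, ← b.inner_diagonal_left hw, diagonal_apply_self, inner_smul_left,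
    RCLike.conj_ofReal, b.repr_apply_apply]

theorem eq_zero_of_diagonal_eq_zero {C : ℝ} (hw : ∀ i, |w i| ≤ C) (hw₀ : ∀ i, w i ≠ 0) {y : E}
    (hy : b.diagonal w y = 0) : y = 0 := by
  refine b.repr.map_eq_zero_iff.mp (lp.ext (funext fun k => ?_))
  have h := b.repr_diagonal hw y k
  rw [hy, map_zero, lp.coeFn_zero, Pi.zero_apply, eq_comm, mul_eq_zero] at h
  exact h.resolve_left (by exact_mod_cast hw₀ k)

end HilbertBasis

namespace ContinuousLinearMap

variable {𝕜 E F : Type*} [RCLike 𝕜] [NormedAddCommGroup E] [InnerProductSpace 𝕜 E]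
  [NormedAddCommGroup F] [InnerProductSpace 𝕜 F]

theorem isPositive_of_apply_toLp_prod {T : WithLp 2 (E × F) →L[𝕜] WithLp 2 (E × F)}
    {S : E → E} {R : F → F} (hT : ∀ x y, T (WithLp.toLp 2 (x, y)) = WithLp.toLp 2 (S x, R y))
    (hS : ∀ x x', ⟪S x, x'⟫_𝕜 = ⟪x, S x'⟫_𝕜) (hR : ∀ y y', ⟪R y, y'⟫_𝕜 = ⟪y, R y'⟫_𝕜)
    (hS₀ : ∀ x, 0 ≤ RCLike.re ⟪S x, x⟫_𝕜) (hR₀ : ∀ y, 0 ≤ RCLike.re ⟪R y, y⟫_𝕜) :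
    T.IsPositive := by
  constructor
  · rintro ⟨x, y⟩ ⟨x', y'⟩
    simp [hT, hS, hR]
  · rintro ⟨x, y⟩
    simpa [reApplyInnerSelf, hT] using add_nonneg (hS₀ x) (hR₀ y)

theorem injective_of_apply_toLp_prod {T : WithLp 2 (E × F) →L[𝕜] WithLp 2 (E × F)}
    {S : E → E} {R : F → F} (hT : ∀ x y, T (WithLp.toLp 2 (x, y)) = WithLp.toLp 2 (S x, R y))
    (hS : ∀ x, S x = 0 → x = 0) (hR : ∀ y, R y = 0 → y = 0) : Function.Injective T := by
  refine (injective_iff_map_eq_zero T).mpr ?_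
  rintro ⟨x, y⟩ hp
  simp only [hT, WithLp.toLp_eq_zero, Prod.mk_eq_zero] at hp
  simp [hS x hp.1, hR y hp.2]

theorem _root_.IsSelfAdjoint.denseRange_of_injective [CompleteSpace E] {T : E →L[𝕜] E}
    (hT : IsSelfAdjoint T) (hinj : Function.Injective T) : DenseRange T := by
  rw [DenseRange, ← coe_coe, ← LinearMap.coe_range, Submodule.dense_iff_topologicalClosure_eq_top,
    Submodule.topologicalClosure_eq_top_iff, Submodule.eq_bot_iff]
  intro x hx
  refine hinj ?_
  rw [map_zero, ← inner_self_eq_zero (𝕜 := 𝕜)]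
  exact (hT.isSymmetric (T x) x).symm.trans (hx _ ⟨T x, rfl⟩)

theorem re_inner_le_opNorm (T : E →L[𝕜] E) {v : E} (hv : ‖v‖ = 1) :
    RCLike.re ⟪T v, v⟫_𝕜 ≤ ‖T‖ :=
  calc RCLike.re ⟪T v, v⟫_𝕜 ≤ ‖T v‖ * ‖v‖ := re_inner_le_norm _ _
    _ ≤ ‖T‖ := by simpa [hv] using T.le_opNorm v

theorem re_inner_le_of_isPositive_smul_sub {G : Type*} [NormedAddCommGroup G]
    [InnerProductSpace ℂ G] {A B : G →L[ℂ] G} {c : ℝ}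
    (h : (c • A - B).IsPositive) (v : G) : (⟪B v, v⟫_ℂ).re ≤ c * (⟪A v, v⟫_ℂ).re := by
  have := h.re_inner_nonneg_left v
  rw [sub_apply, inner_sub_left, map_sub, sub_nonneg, smul_apply, ← Complex.coe_smul,
    inner_smul_left, Complex.conj_ofReal] at this
  simpa using this

end ContinuousLinearMap

theorem notMem_closure_Lplus_of_exists_fixed_norm_lt {E : Type*} [NormedAddCommGroup E]
    [InnerProductSpace ℂ E] [CompleteSpace E] {A P : E →L[ℂ] E}
    (h : ∀ ε > 0, ∃ v, ‖v‖ = 1 ∧ P v = v ∧ ‖A v‖ < ε) : P ∉ closure (Lplus A) := by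
  intro hP
  obtain ⟨B, ⟨-, c, hc, hcB⟩, hPB⟩ := Metric.mem_closure_iff.mp hP (1 / 2) (by norm_num)
  obtain ⟨v, hv, hPv, hAv⟩ := h (1 / (2 * c)) (by positivity)
  have hBv : (⟪B v, v⟫_ℂ).re < 1 / 2 :=
    calc (⟪B v, v⟫_ℂ).re ≤ c * (⟪A v, v⟫_ℂ).re :=
        ContinuousLinearMap.re_inner_le_of_isPositive_smul_sub hcB v
      _ ≤ c * ‖A v‖ := by
        gcongr
        simpa [hv] using re_inner_le_norm (𝕜 := ℂ) (A v) v
      _ < c * (1 / (2 * c)) := by gcongr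
      _ = 1 / 2 := by field_simp
  have hPBv := (P - B).re_inner_le_opNorm hv
  rw [sub_apply, inner_sub_left, map_sub, hPv, inner_self_eq_norm_sq, hv] at hPBv
  rw [dist_eq_norm] at hPB
  norm_num at hPBv
  linarith

theorem projection_not_mem_closure_Lplus_example_general
    {H : Type*} [NormedAddCommGroup H] [InnerProductSpace ℂ H] [CompleteSpace H]
    (e : HilbertBasis ℕ ℂ H)
    (A : WithLp 2 (H × H) →L[ℂ] WithLp 2 (H × H))
    (hA : ∀ x y : H, A ((WithLp.equiv 2 (H × H)).symm (x, y)) =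
      (WithLp.equiv 2 (H × H)).symm
        (x, ∑' n : ℕ, (((2 : ℂ) ^ (n + 1))⁻¹ * ⟪e n, y⟫_ℂ) • e n))
    (V : Submodule ℂ (WithLp 2 (H × H)))
    (hV : ∀ p : WithLp 2 (H × H), p ∈ V ↔ ((WithLp.equiv 2 (H × H)) p).1 = 0)
    (P : WithLp 2 (H × H) →L[ℂ] WithLp 2 (H × H))
    (hPidem : P ∘L P = P) (hPrange : LinearMap.range (P : WithLp 2 (H × H) →ₗ[ℂ] WithLp 2 (H × H)) = V)
    (U : WithLp 2 (H × H) ≃ₗᵢ[ℂ] WithLp 2 (H × H))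
    (hU : ∀ x y : H, U ((WithLp.equiv 2 (H × H)).symm (x, y)) =
      (WithLp.equiv 2 (H × H)).symm (y, x)) :
    A.IsPositive ∧ DenseRange ⇑A ∧
      P ∉ closure (Lplus A) ∧
      ∀ v ∈ V, U v ∈ LinearMap.range (A : WithLp 2 (H × H) →ₗ[ℂ] WithLp 2 (H × H)) := by
  set w : ℕ → ℝ := fun n => 2⁻¹ ^ (n + 1)
  have hw_pos (n : ℕ) : 0 < w n := by positivity
  have hw_le (n : ℕ) : |w n| ≤ 1 :=
    (abs_of_pos (hw_pos n)).trans_le (pow_le_one₀ (by norm_num) (by norm_num))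
  have hA' (x y : H) : A (WithLp.toLp 2 (x, y)) = WithLp.toLp 2 (x, e.diagonal w y) := by
    simpa [HilbertBasis.diagonal, w, inv_pow] using hA x y
  have hApos : A.IsPositive :=
    ContinuousLinearMap.isPositive_of_apply_toLp_prod hA' (fun _ _ => rfl)
      (e.inner_diagonal_left hw_le) (fun _ => inner_self_nonneg)
      (e.re_inner_diagonal_self_nonneg hw_le fun n => (hw_pos n).le)
  refine ⟨hApos, ?_, ?_, ?_⟩
  · exact hApos.isSelfAdjoint.denseRange_of_injective <|
      ContinuousLinearMap.injective_of_apply_toLp_prod hA' (fun _ => id)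
        fun _ => e.eq_zero_of_diagonal_eq_zero hw_le fun n => (hw_pos n).ne'
  · refine notMem_closure_Lplus_of_exists_fixed_norm_lt fun ε hε => ?_
    obtain ⟨k, hk⟩ := exists_pow_lt_of_lt_one hε (by norm_num : (2⁻¹ : ℝ) < 1)
    have hvV : WithLp.toLp 2 ((0 : H), e k) ∈ LinearMap.range (P : WithLp 2 (H × H) →ₗ[ℂ] _) :=
      hPrange ▸ (hV _).mpr rfl
    refine ⟨WithLp.toLp 2 ((0 : H), e k), by simpa using e.orthonormal.1 k, ?_, ?_⟩
    · exact (LinearMap.IsIdempotentElem.mem_range_iff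
        (ContinuousLinearMap.IsIdempotentElem.toLinearMap hPidem)).mp hvV
    · rw [hA', e.diagonal_apply_self, WithLp.norm_toLp_snd, norm_smul, e.orthonormal.1 k,
        mul_one, RCLike.norm_ofReal, abs_of_pos (hw_pos k)]
      exact (pow_lt_pow_right_of_lt_one₀ (by norm_num) (by norm_num) k.lt_succ_self).trans hk
  · rintro ⟨x, y⟩ hv
    obtain rfl : x = 0 := (hV _).mp hv
    refine ⟨WithLp.toLp 2 (y, 0), ?_⟩
    simpa [hA', HilbertBasis.diagonal] using (hU 0 y).symm

/-- Let `H` be infinite-dimensional separable with orthonormal basis `(eₙ)`, and on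
`H ⊕ H` (with the ℓ²-inner product) let `A(x,y) = (x, Σₙ 2⁻ⁿ⟨eₙ,y⟩eₙ)`, `V = 0 ⊕ H`,
`P = P_V` the orthogonal projection onto `V`, and `U(x,y) = (y,x)` the swap unitary. Then
`A` is nonnegative with dense range, `P ∉ 𝓛₊(A)`, yet `U` maps `V` into the range of `A`. -/
theorem projection_not_mem_closure_Lplus_example
    {H : Type*} [NormedAddCommGroup H] [InnerProductSpace ℂ H] [CompleteSpace H]
    [TopologicalSpace.SeparableSpace H] (hinf : ¬ FiniteDimensional ℂ H)
    (e : HilbertBasis ℕ ℂ H)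
    (A : WithLp 2 (H × H) →L[ℂ] WithLp 2 (H × H))
    (hA : ∀ x y : H, A ((WithLp.equiv 2 (H × H)).symm (x, y)) =
      (WithLp.equiv 2 (H × H)).symm
        (x, ∑' n : ℕ, (((2 : ℂ) ^ (n + 1))⁻¹ * ⟪e n, y⟫_ℂ) • e n))
    (V : Submodule ℂ (WithLp 2 (H × H)))
    (hV : ∀ p : WithLp 2 (H × H), p ∈ V ↔ ((WithLp.equiv 2 (H × H)) p).1 = 0)
    (P : WithLp 2 (H × H) →L[ℂ] WithLp 2 (H × H))
    (hPsa : IsSelfAdjoint P) (hPidem : P ∘L P = P) (hPrange : LinearMap.range (P : WithLp 2 (H × H) →ₗ[ℂ] WithLp 2 (H × H)) = V)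
    (U : WithLp 2 (H × H) ≃ₗᵢ[ℂ] WithLp 2 (H × H))
    (hU : ∀ x y : H, U ((WithLp.equiv 2 (H × H)).symm (x, y)) =
      (WithLp.equiv 2 (H × H)).symm (y, x)) :
    A.IsPositive ∧ DenseRange ⇑A ∧
      P ∉ closure (Lplus A) ∧
      ∀ v ∈ V, U v ∈ LinearMap.range (A : WithLp 2 (H × H) →ₗ[ℂ] WithLp 2 (H × H)) :=
  projection_not_mem_closure_Lplus_example_general e A hA V hV P hPidem hPrange U hU
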